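/- arXiv:2504.00897 — 3 statements merged into one kernel-verified Lean document; each statement's English description precedes it below -/
import Mathlib

section
/- Let Σ₁ and Σ₂ be simplicial polyhedral fans in ℝ^{d₁} and ℝ^{d₂} with ray generator matrices U₁ ∈ ℝ^{n₁×d₁} and U₂ ∈ ℝ^{n₂×d₂}, and let Σ = Σ₁ × Σ₂ be the product fan in ℝ^{d₁+d₂} with block-diagonal ray matrix U₁ ⊕ U₂. Then Amp_{Σ,U₁⊕U₂} = Amp_{Σ₁,U₁} · Amp_{Σ₂,U₂} and Adj_{Σ,U₁⊕U₂} = Adj_{Σ₁,U₁} · Adj_{Σ₂,U₂}, where the functions in the disjoint variable sets are multiplied in the ring of rational functions (resp. polynomials) in all n₁+n₂ variables. In particular, for full-dimensional simple polytopes P₁, P₂ with normal fans Σ₁ = Σ_{P₁}, Σ₂ = Σ_{P₂}, one has Amp_{P₁×P₂,U₁⊕U₂} = Amp_{P₁,U₁} · Amp_{P₂,U₂} and Adj_{P₁×P₂,U₁⊕U₂} = Adj_{P₁,U₁} · Adj_{P₂,U₂}. -/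
open MvPolynomial Finset MeasureTheory
open scoped ENNReal

/-- The polyhedral cone spanned by the ray generators (rows of `U`) indexed by `σ`. -/
def coneOf {ι κ : Type*} [Fintype ι] (U : Matrix ι κ ℝ) (σ : Finset ι) : Set (κ → ℝ) :=
  {y | ∃ c : ι → ℝ, (∀ i, 0 ≤ c i) ∧ (∀ i, i ∉ σ → c i = 0) ∧ y = ∑ i, c i • U i}

/-- A simplicial polyhedral fan with rays indexed by `ι`, living in the space `κ → ℝ`.
Since the fan is simplicial, each cone is recorded by its finite set of rays. -/
structure SimplicialFan (ι κ : Type*) [Fintype ι] [DecidableEq ι] where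
  /-- the ray generator matrix: its rows are the chosen ray generators -/
  U : Matrix ι κ ℝ
  /-- the cones of the fan, each recorded by its set of rays -/
  cones : Finset (Finset ι)
  empty_mem : ∅ ∈ cones
  ray_mem : ∀ i : ι, {i} ∈ cones
  downward : ∀ σ ∈ cones, ∀ τ, τ ⊆ σ → τ ∈ cones
  indep : ∀ σ ∈ cones, LinearIndependent ℝ (fun i : σ => U i.1)
  inter : ∀ σ ∈ cones, ∀ τ ∈ cones, coneOf U σ ∩ coneOf U τ = coneOf U (σ ∩ τ)

/-- `|det|` of the square submatrix of `U` on the rows indexed by `σ`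
(zero if `σ` does not have exactly `card κ` elements). -/
noncomputable def absDetRows {ι κ : Type*} [Fintype κ] [DecidableEq κ]
    (U : Matrix ι κ ℝ) (σ : Finset ι) : ℝ :=
  if h : σ.card = Fintype.card κ then
    |(Matrix.of fun j k : κ =>
        U ((σ.equivFin.symm (Fintype.equivFinOfCardEq h.symm j)) : ι) k).det|
  else 0

/-- The universal adjoint polynomial of the fan data `(U, cones)`:
`Adj = ∑_{σ ∈ Σ(d)} |det U_σ| ∏_{ρ ∉ σ(1)} x_ρ`. -/
noncomputable def Adj {ι κ : Type*} [Fintype ι] [DecidableEq ι] [Fintype κ] [DecidableEq κ]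
    (U : Matrix ι κ ℝ) (cones : Finset (Finset ι)) : MvPolynomial ι ℝ :=
  ∑ σ ∈ cones.filter fun σ => σ.card = Fintype.card κ,
    MvPolynomial.C (absDetRows U σ) * ∏ ρ ∈ σᶜ, MvPolynomial.X ρ

/-- The toric amplitude `Amp = ∑_{σ ∈ Σ(d)} |det U_σ| / ∏_{ρ ∈ σ(1)} x_ρ`
as a real-valued function. -/
noncomputable def Amp {ι κ : Type*} [Fintype ι] [DecidableEq ι] [Fintype κ] [DecidableEq κ]
    (U : Matrix ι κ ℝ) (cones : Finset (Finset ι)) (x : ι → ℝ) : ℝ :=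
  ∑ σ ∈ cones.filter fun σ => σ.card = Fintype.card κ, absDetRows U σ / ∏ ρ ∈ σ, x ρ

/-- The toric amplitude with values in `ℝ≥0∞` (for identities with possibly infinite
dual volumes). -/
noncomputable def AmpE {ι κ : Type*} [Fintype ι] [DecidableEq ι] [Fintype κ] [DecidableEq κ]
    (U : Matrix ι κ ℝ) (cones : Finset (Finset ι)) (x : ι → ℝ) : ℝ≥0∞ :=
  ∑ σ ∈ cones.filter fun σ => σ.card = Fintype.card κ,
    ENNReal.ofReal (absDetRows U σ) / ∏ ρ ∈ σ, ENNReal.ofReal (x ρ)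

/-- The toric amplitude as an element of the field of rational functions. -/
noncomputable def AmpFrac {ι κ : Type*} [Fintype ι] [DecidableEq ι] [Fintype κ] [DecidableEq κ]
    (U : Matrix ι κ ℝ) (cones : Finset (Finset ι)) : FractionRing (MvPolynomial ι ℝ) :=
  ∑ σ ∈ cones.filter fun σ => σ.card = Fintype.card κ,
    algebraMap (MvPolynomial ι ℝ) (FractionRing (MvPolynomial ι ℝ)) (MvPolynomial.C (absDetRows U σ)) /
      algebraMap (MvPolynomial ι ℝ) (FractionRing (MvPolynomial ι ℝ)) (∏ ρ ∈ σ, MvPolynomial.X ρ)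

/-- The toric amplitude of fan data whose rays are indexed by a type `α` mapping to `ι`
via `f`, viewed inside the rational function field on the `ι`-variables. -/
noncomputable def AmpFracVia {α ι κ' : Type*} [Fintype α] [DecidableEq α]
    [Fintype κ'] [DecidableEq κ']
    (U' : Matrix α κ' ℝ) (cones' : Finset (Finset α)) (f : α → ι) :
    FractionRing (MvPolynomial ι ℝ) :=
  ∑ σ ∈ cones'.filter fun σ => σ.card = Fintype.card κ',
    algebraMap (MvPolynomial ι ℝ) (FractionRing (MvPolynomial ι ℝ)) (MvPolynomial.C (absDetRows U' σ)) /
      algebraMap (MvPolynomial ι ℝ) (FractionRing (MvPolynomial ι ℝ)) (∏ ρ ∈ σ, MvPolynomial.X (f ρ))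

/-- The polyhedron `P_z = {y : U y + z ≥ 0}`. -/
def Pz {ι κ : Type*} [Fintype κ] (U : Matrix ι κ ℝ) (z : ι → ℝ) : Set (κ → ℝ) :=
  {y | ∀ i, 0 ≤ (∑ j, U i j * y j) + z i}

/-- The face of `P_z` where the inequalities indexed by `τ` are tight. -/
def faceOf {ι κ : Type*} [Fintype κ] (U : Matrix ι κ ℝ) (z : ι → ℝ) (τ : Finset ι) :
    Set (κ → ℝ) :=
  {y | y ∈ Pz U z ∧ ∀ i ∈ τ, (∑ j, U i j * y j) + z i = 0}

/-- `F` is the normal fan of the polytope `P_z`, which is a full-dimensional simple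
(bounded) polytope whose facets are indexed by the rays of `F`: a set of inequalities
spans a cone of the normal fan iff they are simultaneously tight on a nonempty face. -/
def IsNormalFanOf {ι κ : Type*} [Fintype ι] [DecidableEq ι] [Fintype κ]
    (F : SimplicialFan ι κ) (z : ι → ℝ) : Prop :=
  Bornology.IsBounded (Pz F.U z) ∧ (interior (Pz F.U z)).Nonempty ∧
    ∀ σ : Finset ι, σ ∈ F.cones ↔ (faceOf F.U z σ).Nonempty

/-- The polar dual `{u : u ⬝ y ≥ -1 for all y ∈ P}`. -/
def polarDual {κ : Type*} [Fintype κ] (P : Set (κ → ℝ)) : Set (κ → ℝ) :=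
  {u | ∀ y ∈ P, -1 ≤ ∑ j, u j * y j}

/-- Warren's adjoint polynomial `adj_{P_z}(y) = Adj(U y + z)`. -/
noncomputable def warrenAdj {ι κ : Type*} [Fintype ι] [DecidableEq ι] [Fintype κ] [DecidableEq κ]
    (U : Matrix ι κ ℝ) (cones : Finset (Finset ι)) (z : ι → ℝ) : MvPolynomial κ ℝ :=
  MvPolynomial.aeval (fun i : ι => (∑ j, MvPolynomial.C (U i j) * MvPolynomial.X j) + MvPolynomial.C (z i))
    (Adj U cones)

/-- The neighbours `nb(τ)` of a cone `τ`: rays `ρ ∉ τ` with `τ ∪ {ρ}` a cone. -/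
def nbF {ι : Type*} [Fintype ι] [DecidableEq ι] (cones : Finset (Finset ι)) (τ : Finset ι) :
    Finset ι :=
  Finset.univ.filter fun ρ => ρ ∉ τ ∧ insert ρ τ ∈ cones

/-- The rows of `U * T` indexed by `τ` are the first `k` standard basis vectors. -/
def RowsStd {ι : Type*} {d : ℕ} (U : Matrix ι (Fin d) ℝ) (T : Matrix (Fin d) (Fin d) ℝ)
    (τ : Finset ι) (k : ℕ) : Prop :=
  ∃ g : {ρ : ι // ρ ∈ τ} → Fin d, Function.Injective g ∧ (∀ ρ, (g ρ : ℕ) < k) ∧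
    ∀ ρ : {ρ : ι // ρ ∈ τ}, (U * T) ρ.1 = Pi.single (g ρ) 1

/-- The ray matrix of the star fan `Σ_τ`: the last `d-k` columns of `U * T`, on the
rows indexed by `nb(τ)` (here `N`). -/
def starU {ι : Type*} {d : ℕ} (U : Matrix ι (Fin d) ℝ) (T : Matrix (Fin d) (Fin d) ℝ)
    (N : Finset ι) (k : ℕ) : Matrix {ρ : ι // ρ ∈ N} {j : Fin d // k ≤ (j : ℕ)} ℝ :=
  fun ρ j => (U * T) ρ.1 j.1

/-- The cones of the star fan `Σ_τ`, recorded by their sets of rays (as subsets of `N = nb(τ)`). -/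
def starCones {ι : Type*} [DecidableEq ι] (cones : Finset (Finset ι)) (τ : Finset ι)
    (N : Finset ι) : Finset (Finset {ρ : ι // ρ ∈ N}) :=
  (cones.filter fun σ => τ ⊆ σ).image fun σ => (σ \ τ).subtype fun ρ => ρ ∈ N

/-- Restriction of polynomials to the coordinate subspace `Λ_τ = {x_ρ = 0, ρ ∈ τ}`. -/
noncomputable def restrictTo {ι : Type*} {R : Type*} [CommSemiring R] [DecidableEq ι]
    (τ : Finset ι) : MvPolynomial ι R →ₐ[R] MvPolynomial ι R :=
  MvPolynomial.aeval fun ρ => if ρ ∈ τ then 0 else MvPolynomial.X ρ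

/-- The deformation cone of a (complete simplicial) fan: those `x` for which each
"virtual vertex" of `P_x` determined by a maximal cone satisfies all inequalities. -/
def DefCone {ι κ : Type*} [Fintype ι] [DecidableEq ι] [Fintype κ] (F : SimplicialFan ι κ) :
    Set (ι → ℝ) :=
  {x | ∀ σ ∈ F.cones, σ.card = Fintype.card κ →
    ∃ v : κ → ℝ, (∀ ρ ∈ σ, (∑ j, F.U ρ j * v j) + x ρ = 0) ∧
      ∀ ρ : ι, 0 ≤ (∑ j, F.U ρ j * v j) + x ρ}

/-- The `(d+1) × (d+1)` determinant `W_Δ(x)` of the matrix with rows `(u_ρ, x_ρ)`,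
`ρ ∈ S` (defined up to sign; zero if `S` does not have `d+1` elements). -/
noncomputable def Wdet {ι κ : Type*} [Fintype κ] [DecidableEq κ]
    (U : Matrix ι κ ℝ) (S : Finset ι) (x : ι → ℝ) : ℝ :=
  if h : S.card = Fintype.card (Option κ) then
    (Matrix.of fun a b : Option κ =>
      Option.elim b (x ((S.equivFin.symm (Fintype.equivFinOfCardEq h.symm a)) : ι))
        (fun k => U ((S.equivFin.symm (Fintype.equivFinOfCardEq h.symm a)) : ι) k)).det
  else 0

/-! A maximal cone of `Σ₁ × Σ₂` is a disjoint union `σ₁ ⊔ σ₂` of cones whose sizes are bounded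
by `d₁` and `d₂` and add up to `d₁ + d₂`, so both `σᵢ` are maximal; the ray matrix of `σ₁ ⊔ σ₂`
is block diagonal, so its `|det|` is the product, and the monomials split along `ι₁ ⊕ ι₂`.
Hence both sums over maximal cones factor. -/

lemma absDetRows_eq_abs_det_of_equiv {ι κ : Type*} [Fintype κ] [DecidableEq κ]
    (U : Matrix ι κ ℝ) {σ : Finset ι} (h : σ.card = Fintype.card κ) (e : κ ≃ σ) :
    absDetRows U σ = |(Matrix.of fun j k => U (e j) k).det| := by
  set e₀ : κ ≃ σ := (Fintype.equivFinOfCardEq h.symm).trans σ.equivFin.symm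
  have hperm : (Matrix.of fun j k => U (e j) k)
      = (Matrix.of fun j k => U (e₀ j) k).submatrix (e.trans e₀.symm) (Equiv.refl κ) := by
    ext j k; simp [Matrix.submatrix]
  rw [hperm, Matrix.abs_det_submatrix_equiv_equiv, absDetRows, dif_pos h]
  rfl

lemma absDetRows_fromBlocks_disjSum {ι₁ ι₂ κ₁ κ₂ : Type*}
    [Fintype κ₁] [DecidableEq κ₁] [Fintype κ₂] [DecidableEq κ₂]
    (U₁ : Matrix ι₁ κ₁ ℝ) (U₂ : Matrix ι₂ κ₂ ℝ) {σ₁ : Finset ι₁} {σ₂ : Finset ι₂}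
    (h₁ : σ₁.card = Fintype.card κ₁) (h₂ : σ₂.card = Fintype.card κ₂) :
    absDetRows (Matrix.fromBlocks U₁ 0 0 U₂) (σ₁.disjSum σ₂)
      = absDetRows U₁ σ₁ * absDetRows U₂ σ₂ := by
  set e₁ : κ₁ ≃ σ₁ := (Fintype.equivFinOfCardEq h₁.symm).trans σ₁.equivFin.symm
  set e₂ : κ₂ ≃ σ₂ := (Fintype.equivFinOfCardEq h₂.symm).trans σ₂.equivFin.symm
  set e : κ₁ ⊕ κ₂ ≃ σ₁.disjSum σ₂ :=
    ((e₁.trans (Equiv.subtypeEquivRight fun _ => Finset.inl_mem_disjSum (t := σ₂)).symm).sumCongr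
      (e₂.trans (Equiv.subtypeEquivRight fun _ => Finset.inr_mem_disjSum (s := σ₁)).symm)).trans
      Equiv.subtypeSum.symm
  have hc : (σ₁.disjSum σ₂).card = Fintype.card (κ₁ ⊕ κ₂) := by simp [h₁, h₂]
  have hblocks : (Matrix.of fun j k => Matrix.fromBlocks U₁ 0 0 U₂ (e j) k)
      = Matrix.fromBlocks (Matrix.of fun j k => U₁ (e₁ j) k) 0 0
          (Matrix.of fun j k => U₂ (e₂ j) k) := by
    ext (j | j) (k | k) <;> rfl
  rw [absDetRows_eq_abs_det_of_equiv _ hc e, absDetRows_eq_abs_det_of_equiv _ h₁ e₁,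
    absDetRows_eq_abs_det_of_equiv _ h₂ e₂, hblocks, Matrix.det_fromBlocks_zero₁₂, abs_mul]

lemma SimplicialFan.card_le_of_mem_cones {ι κ : Type*} [Fintype ι] [DecidableEq ι] [Fintype κ]
    (F : SimplicialFan ι κ) {σ : Finset ι} (hσ : σ ∈ F.cones) : σ.card ≤ Fintype.card κ := by
  simpa using (F.indep σ hσ).fintype_card_le_finrank

namespace Finset

lemma compl_disjSum {α β : Type*} [Fintype α] [DecidableEq α] [Fintype β] [DecidableEq β]
    (s : Finset α) (t : Finset β) : (s.disjSum t)ᶜ = sᶜ.disjSum tᶜ := by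
  ext (x | x) <;> simp

lemma map_inl_union_map_inr {α β : Type*} [DecidableEq α] [DecidableEq β]
    (s : Finset α) (t : Finset β) :
    s.map ⟨Sum.inl, Sum.inl_injective⟩ ∪ t.map ⟨Sum.inr, Sum.inr_injective⟩ = s.disjSum t := by
  ext (x | x) <;> simp

end Finset

section ProductFan

variable {ι₁ ι₂ : Type*} [DecidableEq ι₁] [DecidableEq ι₂]
  {cones₁ : Finset (Finset ι₁)} {cones₂ : Finset (Finset ι₂)}
  {cones : Finset (Finset (ι₁ ⊕ ι₂))}

lemma filter_card_eq_image_disjSum {d₁ d₂ : ℕ}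
    (h₁ : ∀ σ ∈ cones₁, σ.card ≤ d₁) (h₂ : ∀ σ ∈ cones₂, σ.card ≤ d₂)
    (hcones : ∀ σ, σ ∈ cones ↔ ∃ σ₁ ∈ cones₁, ∃ σ₂ ∈ cones₂, σ = σ₁.disjSum σ₂) :
    cones.filter (·.card = d₁ + d₂) =
      (cones₁.filter (·.card = d₁) ×ˢ cones₂.filter (·.card = d₂)).image
        fun p => p.1.disjSum p.2 := by
  ext σ
  simp only [mem_filter, hcones, mem_image, mem_product, Prod.exists]
  constructor
  · rintro ⟨⟨σ₁, hσ₁, σ₂, hσ₂, rfl⟩, hcard⟩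
    have := h₁ σ₁ hσ₁
    have := h₂ σ₂ hσ₂
    rw [card_disjSum] at hcard
    exact ⟨σ₁, σ₂, ⟨⟨hσ₁, by omega⟩, hσ₂, by omega⟩, rfl⟩
  · rintro ⟨σ₁, σ₂, ⟨⟨hσ₁, hc₁⟩, hσ₂, hc₂⟩, rfl⟩
    exact ⟨⟨σ₁, hσ₁, σ₂, hσ₂, rfl⟩, by rw [card_disjSum, hc₁, hc₂]⟩

lemma sum_filter_card_eq_sum_disjSum {M : Type*} [AddCommMonoid M] {d₁ d₂ : ℕ}
    (h₁ : ∀ σ ∈ cones₁, σ.card ≤ d₁) (h₂ : ∀ σ ∈ cones₂, σ.card ≤ d₂)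
    (hcones : ∀ σ, σ ∈ cones ↔ ∃ σ₁ ∈ cones₁, ∃ σ₂ ∈ cones₂, σ = σ₁.disjSum σ₂)
    (f : Finset (ι₁ ⊕ ι₂) → M) :
    ∑ σ ∈ cones.filter (·.card = d₁ + d₂), f σ =
      ∑ σ₁ ∈ cones₁.filter (·.card = d₁), ∑ σ₂ ∈ cones₂.filter (·.card = d₂),
        f (σ₁.disjSum σ₂) := by
  rw [filter_card_eq_image_disjSum h₁ h₂ hcones,
    sum_image fun p _ q _ h => Prod.ext_iff.2 (disjSum_inj.1 h), sum_product]

variable [Fintype ι₁] [Fintype ι₂] {κ₁ κ₂ : Type*}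
  [Fintype κ₁] [DecidableEq κ₁] [Fintype κ₂] [DecidableEq κ₂]
  (U₁ : Matrix ι₁ κ₁ ℝ) (U₂ : Matrix ι₂ κ₂ ℝ)

theorem Adj_fromBlocks
    (h₁ : ∀ σ ∈ cones₁, σ.card ≤ Fintype.card κ₁) (h₂ : ∀ σ ∈ cones₂, σ.card ≤ Fintype.card κ₂)
    (hcones : ∀ σ, σ ∈ cones ↔ ∃ σ₁ ∈ cones₁, ∃ σ₂ ∈ cones₂, σ = σ₁.disjSum σ₂) :
    Adj (Matrix.fromBlocks U₁ 0 0 U₂) cones =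
      rename Sum.inl (Adj U₁ cones₁) * rename Sum.inr (Adj U₂ cones₂) := by
  simp only [Adj, Fintype.card_sum, map_sum, map_mul, rename_C, map_prod, rename_X]
  rw [sum_filter_card_eq_sum_disjSum h₁ h₂ hcones, sum_mul_sum]
  refine sum_congr rfl fun σ₁ hσ₁ => sum_congr rfl fun σ₂ hσ₂ => ?_
  rw [absDetRows_fromBlocks_disjSum _ _ (mem_filter.1 hσ₁).2 (mem_filter.1 hσ₂).2,
    compl_disjSum, prod_disjSum, C_mul]
  ring

theorem Amp_fromBlocks
    (h₁ : ∀ σ ∈ cones₁, σ.card ≤ Fintype.card κ₁) (h₂ : ∀ σ ∈ cones₂, σ.card ≤ Fintype.card κ₂)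
    (hcones : ∀ σ, σ ∈ cones ↔ ∃ σ₁ ∈ cones₁, ∃ σ₂ ∈ cones₂, σ = σ₁.disjSum σ₂)
    (x : ι₁ ⊕ ι₂ → ℝ) :
    Amp (Matrix.fromBlocks U₁ 0 0 U₂) cones x =
      Amp U₁ cones₁ (x ∘ Sum.inl) * Amp U₂ cones₂ (x ∘ Sum.inr) := by
  simp only [Amp, Fintype.card_sum]
  rw [sum_filter_card_eq_sum_disjSum h₁ h₂ hcones, sum_mul_sum]
  refine sum_congr rfl fun σ₁ hσ₁ => sum_congr rfl fun σ₂ hσ₂ => ?_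
  rw [absDetRows_fromBlocks_disjSum _ _ (mem_filter.1 hσ₁).2 (mem_filter.1 hσ₂).2,
    prod_disjSum, div_mul_div_comm]
  rfl

end ProductFan

theorem statement0_general {ι₁ ι₂ κ₁ κ₂ : Type*}
    [Fintype ι₁] [DecidableEq ι₁] [Fintype ι₂] [DecidableEq ι₂]
    [Fintype κ₁] [DecidableEq κ₁] [Fintype κ₂] [DecidableEq κ₂]
    (F₁ : SimplicialFan ι₁ κ₁) (F₂ : SimplicialFan ι₂ κ₂)
    (F : SimplicialFan (ι₁ ⊕ ι₂) (κ₁ ⊕ κ₂))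
    (hU : F.U = Matrix.fromBlocks F₁.U 0 0 F₂.U)
    (hcones : ∀ σ : Finset (ι₁ ⊕ ι₂), σ ∈ F.cones ↔
      ∃ σ₁ ∈ F₁.cones, ∃ σ₂ ∈ F₂.cones,
        σ = σ₁.map ⟨Sum.inl, Sum.inl_injective⟩ ∪ σ₂.map ⟨Sum.inr, Sum.inr_injective⟩) :
    Adj F.U F.cones =
        MvPolynomial.rename Sum.inl (Adj F₁.U F₁.cones) *
          MvPolynomial.rename Sum.inr (Adj F₂.U F₂.cones) ∧
      ∀ x : ι₁ ⊕ ι₂ → ℝ, (∀ i, x i ≠ 0) →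
        Amp F.U F.cones x = Amp F₁.U F₁.cones (x ∘ Sum.inl) * Amp F₂.U F₂.cones (x ∘ Sum.inr) := by
  have hprod : ∀ σ, σ ∈ F.cones ↔ ∃ σ₁ ∈ F₁.cones, ∃ σ₂ ∈ F₂.cones, σ = σ₁.disjSum σ₂ := by
    simpa only [Finset.map_inl_union_map_inr] using hcones
  have h₁ := fun σ => F₁.card_le_of_mem_cones (σ := σ)
  have h₂ := fun σ => F₂.card_le_of_mem_cones (σ := σ)
  rw [hU]
  exact ⟨Adj_fromBlocks F₁.U F₂.U h₁ h₂ hprod, fun x _ => Amp_fromBlocks F₁.U F₂.U h₁ h₂ hprod x⟩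

/-- The toric amplitude and universal adjoint of a product fan
`Σ = Σ₁ × Σ₂` (with block-diagonal ray matrix `U₁ ⊕ U₂`) factor as the products of
those of the factors; in particular this applies to normal fans of products of
simple polytopes. -/
theorem statement0 {ι₁ ι₂ κ₁ κ₂ : Type*}
    [Fintype ι₁] [DecidableEq ι₁] [Fintype ι₂] [DecidableEq ι₂]
    [Fintype κ₁] [DecidableEq κ₁] [Fintype κ₂] [DecidableEq κ₂]
    (F₁ : SimplicialFan ι₁ κ₁) (F₂ : SimplicialFan ι₂ κ₂)
    (hrank₁ : F₁.U.rank = Fintype.card κ₁) (hrank₂ : F₂.U.rank = Fintype.card κ₂)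
    (F : SimplicialFan (ι₁ ⊕ ι₂) (κ₁ ⊕ κ₂))
    (hU : F.U = Matrix.fromBlocks F₁.U 0 0 F₂.U)
    (hcones : ∀ σ : Finset (ι₁ ⊕ ι₂), σ ∈ F.cones ↔
      ∃ σ₁ ∈ F₁.cones, ∃ σ₂ ∈ F₂.cones,
        σ = σ₁.map ⟨Sum.inl, Sum.inl_injective⟩ ∪ σ₂.map ⟨Sum.inr, Sum.inr_injective⟩) :
    Adj F.U F.cones =
        MvPolynomial.rename Sum.inl (Adj F₁.U F₁.cones) *
          MvPolynomial.rename Sum.inr (Adj F₂.U F₂.cones) ∧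
      ∀ x : ι₁ ⊕ ι₂ → ℝ, (∀ i, x i ≠ 0) →
        Amp F.U F.cones x = Amp F₁.U F₁.cones (x ∘ Sum.inl) * Amp F₂.U F₂.cones (x ∘ Sum.inr) :=
  statement0_general F₁ F₂ F hU hcones
end

section
/- Let Σ be a simplicial polyhedral fan in ℝ^d with ray generator matrix U ∈ ℝ^{n×d} of rank d, and let τ ∈ Σ(k) be a k-dimensional cone. Let T_τ be an invertible d×d matrix such that the rows of U·T_τ indexed by τ(1) are the standard basis vectors e₁,…,e_k, set c_τ = |det T_τ|, and let U_τ be the submatrix of U·T_τ consisting of the last d−k columns and the rows indexed by nb(τ), which is a ray matrix for the star fan Σ_τ. Then the restriction of Adj_{Σ,U}(x) to the coordinate subspace Λ_τ = {x : x_ρ = 0 for all ρ ∈ τ(1)} equals c_τ^{-1} · (∏_{ρ ∉ nb(τ), ρ ∉ τ(1)} x_ρ) · Adj_{Σ_τ,U_τ}, where Adj_{Σ_τ,U_τ} is viewed as a polynomial in the variables x_ρ, ρ ∈ nb(τ). -/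
/-!
Restricting to `Λ_τ` kills the term of a maximal cone `σ` unless `τ ⊆ σ`, since otherwise the
monomial `∏_{ρ ∉ σ} x_ρ` contains some `x_ρ` with `ρ ∈ τ`. Downward closure of the fan puts
`σ \ τ` inside `nb(τ)`, so `σ ↦ σ \ τ` is a bijection from the maximal cones containing `τ` onto
the maximal cones of the star fan, and the monomial of `σ` splits off the factor
`∏_{ρ ∉ nb(τ) ∪ τ} x_ρ`. For the coefficients, `|det U_σ| · |det T| = |det (U T)_σ|`, and after
ordering rows as `τ, σ \ τ` and columns as `< k, ≥ k` the matrix `(U T)_σ` is block lower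
triangular with identity upper-left block, so its determinant is that of the star-fan block.
-/

open MvPolynomial Finset MeasureTheory
open scoped ENNReal

lemma Fin.card_subtype_val_lt {d k : ℕ} (h : k ≤ d) :
    Fintype.card {j : Fin d // (j : ℕ) < k} = k := by
  rw [Fintype.card_subtype, Fin.card_filter_val_lt, min_eq_right h]

lemma Fin.card_subtype_le_val {d k : ℕ} (h : k ≤ d) :
    Fintype.card {j : Fin d // k ≤ (j : ℕ)} = d - k := by
  simp_rw [← not_lt]
  rw [Fintype.card_subtype_compl, Fintype.card_fin, Fin.card_subtype_val_lt h]

lemma Finset.card_subtype_of_subset {ι : Type*} [DecidableEq ι] {s N : Finset ι} (hsN : s ⊆ N) :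
    (s.subtype (· ∈ N)).card = s.card := by
  rw [card_subtype, filter_true_of_mem hsN]

section AbsDetRows

variable {ι κ : Type*} [Fintype κ] [DecidableEq κ]

lemma absDetRows_eq_abs_det {β : Type*} [Fintype β] [DecidableEq β]
    (M : Matrix ι κ ℝ) {S : Finset ι} (hS : S.card = Fintype.card κ)
    (f : β → ι) (hf : Function.Injective f) (hfS : ∀ b, f b ∈ S) (e : β ≃ κ) :
    absDetRows M S = |(Matrix.of fun p q : β => M (f p) (e q)).det| := by
  rw [absDetRows, dif_pos hS]
  set r : κ ≃ S := (Fintype.equivFinOfCardEq hS.symm).trans S.equivFin.symm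
  have hf' : Function.Bijective fun b => (⟨f b, hfS b⟩ : S) :=
    (Fintype.bijective_iff_injective_and_card _).2
      ⟨fun a b hab => hf (congrArg Subtype.val hab),
        by rw [Fintype.card_coe, hS, Fintype.card_congr e]⟩
  have hreindex : (Matrix.of fun p q : β => M (f p) (e q)) =
      (Matrix.of fun j l : κ => M (r j) l).submatrix ((Equiv.ofBijective _ hf').trans r.symm) e := by
    ext p q
    simp
  rw [hreindex, Matrix.abs_det_submatrix_equiv_equiv]
  rfl

lemma absDetRows_mul (U : Matrix ι κ ℝ) (T : Matrix κ κ ℝ) (σ : Finset ι) :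
    absDetRows (U * T) σ = absDetRows U σ * |T.det| := by
  unfold absDetRows
  split_ifs
  · rw [← abs_mul, ← Matrix.det_mul]
    congr 2
  · rw [zero_mul]

end AbsDetRows

lemma Matrix.det_eq_det_toBlocks₂₂ {R m n : Type*} [CommRing R] [Fintype m] [DecidableEq m]
    [Fintype n] [DecidableEq n] (B : Matrix (m ⊕ n) (m ⊕ n) R) (h₁₁ : B.toBlocks₁₁ = 1)
    (h₁₂ : B.toBlocks₁₂ = 0) : B.det = B.toBlocks₂₂.det := by
  conv_lhs => rw [← B.fromBlocks_toBlocks, h₁₁, h₁₂]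
  rw [det_fromBlocks_zero₁₂, det_one, one_mul]

lemma RowsStd.card_le {ι : Type*} {d k : ℕ} {U : Matrix ι (Fin d) ℝ}
    {T : Matrix (Fin d) (Fin d) ℝ} {τ : Finset ι} (hT : RowsStd U T τ k) : τ.card ≤ d := by
  obtain ⟨g, hg_inj, -, -⟩ := hT
  simpa using Fintype.card_le_of_injective g hg_inj

lemma absDetRows_mul_eq_absDetRows_starU {ι : Type*} [DecidableEq ι] {d k : ℕ}
    (U : Matrix ι (Fin d) ℝ) (T : Matrix (Fin d) (Fin d) ℝ) {τ σ N : Finset ι}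
    (hT : RowsStd U T τ k) (hτ : τ.card = k) (hτσ : τ ⊆ σ) (hσN : σ \ τ ⊆ N) (hσ : σ.card = d) :
    absDetRows (U * T) σ = absDetRows (starU U T N k) ((σ \ τ).subtype (· ∈ N)) := by
  have hkd : k ≤ d := hτ ▸ hT.card_le
  obtain ⟨g, hg_inj, hg_lt, hg_rows⟩ := hT
  have hσ' : (σ \ τ).card = d - k := by rw [Finset.card_sdiff_of_subset hτσ, hσ, hτ]
  let gE : τ ≃ {j : Fin d // (j : ℕ) < k} := Equiv.ofBijective (fun ρ => ⟨g ρ, hg_lt ρ⟩)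
    ((Fintype.bijective_iff_injective_and_card _).2
      ⟨fun a b hab => hg_inj (congrArg Subtype.val hab),
        by rw [Fintype.card_coe, hτ, Fin.card_subtype_val_lt hkd]⟩)
  let e : (σ \ τ : Finset ι) ≃ {j : Fin d // k ≤ (j : ℕ)} :=
    Fintype.equivOfCardEq (by rw [Fintype.card_coe, hσ', Fin.card_subtype_le_val hkd])
  let col : τ ⊕ (σ \ τ : Finset ι) ≃ Fin d := (Equiv.sumCongr gE
      (e.trans (Equiv.subtypeEquivRight fun j => not_lt.symm))).trans (Equiv.sumCompl _)
  let row : τ ⊕ (σ \ τ : Finset ι) → ι := Sum.elim Subtype.val Subtype.val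
  have hrow : Function.Injective row :=
    Subtype.val_injective.sumElim Subtype.val_injective
      fun a b hab => (Finset.mem_sdiff.1 b.2).2 (hab ▸ a.2)
  let B := Matrix.of fun p q => (U * T) (row p) (col q)
  have hB_row : ∀ a q, B (.inl a) q = (Pi.single (g a) 1 : Fin d → ℝ) (col q) :=
    fun a q => congrFun (hg_rows a) (col q)
  have hB₁₁ : B.toBlocks₁₁ = 1 := by
    ext a a'
    rw [Matrix.toBlocks₁₁, Matrix.of_apply, hB_row, Matrix.one_apply]
    simp [col, gE, Pi.single_apply, hg_inj.eq_iff, eq_comm]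
  have hB₁₂ : B.toBlocks₁₂ = 0 := by
    ext a b
    rw [Matrix.toBlocks₁₂, Matrix.of_apply, hB_row]
    exact Pi.single_eq_of_ne
      (show (e b : Fin d) ≠ g a from fun h => not_le.2 (hg_lt a) (h ▸ (e b).2)) 1
  rw [absDetRows_eq_abs_det (U * T) (by rw [hσ, Fintype.card_fin]) row hrow
      (Sum.rec (fun a => hτσ a.2) fun b => (Finset.mem_sdiff.1 b.2).1) col,
    absDetRows_eq_abs_det (starU U T N k)
      (by rw [card_subtype_of_subset hσN, hσ', Fin.card_subtype_le_val hkd])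
      (fun b : (σ \ τ : Finset ι) => (⟨b, hσN b.2⟩ : N))
      (fun _ _ hab => Subtype.ext (Subtype.mk.inj hab)) (fun b => Finset.mem_subtype.2 b.2) e]
  exact congrArg abs (B.det_eq_det_toBlocks₂₂ hB₁₁ hB₁₂)

section Restrict

variable {ι : Type*} [DecidableEq ι]

lemma restrictTo_prod_X {R : Type*} [CommSemiring R] (τ s : Finset ι) :
    restrictTo τ (∏ ρ ∈ s, X ρ : MvPolynomial ι R) =
      if Disjoint s τ then ∏ ρ ∈ s, X ρ else 0 := by
  rw [map_prod]
  split_ifs with h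
  · exact prod_congr rfl fun ρ hρ => by simp [restrictTo, disjoint_left.1 h hρ]
  · obtain ⟨ρ, hρs, hρτ⟩ := not_disjoint_iff.1 h
    exact prod_eq_zero hρs (by simp [restrictTo, hρτ])

lemma restrictTo_Adj [Fintype ι] {κ : Type*} [Fintype κ] [DecidableEq κ]
    (U : Matrix ι κ ℝ) (cones : Finset (Finset ι)) (τ : Finset ι) :
    restrictTo τ (Adj U cones) =
      ∑ σ ∈ cones.filter (fun σ => σ.card = Fintype.card κ ∧ τ ⊆ σ),
        C (absDetRows U σ) * ∏ ρ ∈ σᶜ, X ρ := by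
  rw [Adj, map_sum]
  conv_rhs => rw [← filter_filter, sum_filter]
  refine sum_congr rfl fun σ _ => ?_
  rw [map_mul, restrictTo_prod_X, mul_ite, mul_zero]
  simp [restrictTo, disjoint_compl_left_iff]

end Restrict

section StarCones

variable {ι : Type*} [DecidableEq ι]

lemma eq_of_subtype_sdiff_eq {τ σ₁ σ₂ N : Finset ι} (h₁ : τ ⊆ σ₁) (h₂ : τ ⊆ σ₂)
    (h₁N : σ₁ \ τ ⊆ N) (h₂N : σ₂ \ τ ⊆ N)
    (h : (σ₁ \ τ).subtype (· ∈ N) = (σ₂ \ τ).subtype (· ∈ N)) : σ₁ = σ₂ := by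
  have hsdiff := congrArg (map (Function.Embedding.subtype (· ∈ N))) h
  rw [subtype_map_of_mem h₁N, subtype_map_of_mem h₂N] at hsdiff
  rw [← sdiff_union_of_subset h₁, hsdiff, sdiff_union_of_subset h₂]

lemma map_compl_subtype_sdiff {τ σ N : Finset ι} (hNτ : Disjoint N τ) :
    ((σ \ τ).subtype (· ∈ N))ᶜ.map (Function.Embedding.subtype (· ∈ N)) = N \ σ := by
  ext ρ
  have : ρ ∈ N → ρ ∉ τ := fun h => disjoint_left.1 hNτ h
  simp only [mem_map, mem_compl, mem_subtype, mem_sdiff, Function.Embedding.subtype_apply,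
    Subtype.exists, exists_and_left, exists_prop, exists_eq_right_right]
  tauto

lemma prod_X_compl_eq_mul_rename [Fintype ι] {R : Type*} [CommSemiring R] {τ σ N : Finset ι}
    (hτσ : τ ⊆ σ) (hσN : σ \ τ ⊆ N) (hNτ : Disjoint N τ) :
    (∏ ρ ∈ σᶜ, X ρ : MvPolynomial ι R) =
      (∏ ρ ∈ (N ∪ τ)ᶜ, X ρ) * rename Subtype.val (∏ ρ ∈ ((σ \ τ).subtype (· ∈ N))ᶜ, X ρ) := by
  have hsplit : σᶜ = (N ∪ τ)ᶜ ∪ N \ σ := by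
    ext ρ
    have hτ : ρ ∈ τ → ρ ∈ σ := fun h => hτσ h
    have hN : ρ ∈ σ \ τ → ρ ∈ N := fun h => hσN h
    simp only [mem_compl, mem_union, mem_sdiff] at hN ⊢
    tauto
  have hdisj : Disjoint (N ∪ τ)ᶜ (N \ σ) :=
    disjoint_left.2 fun ρ h h' => mem_compl.1 h (mem_union_left _ (mem_sdiff.1 h').1)
  rw [hsplit, prod_union hdisj, map_prod, ← map_compl_subtype_sdiff hNτ, prod_map]
  simp only [rename_X]
  rfl

variable [Fintype ι] {κ : Type*}

lemma SimplicialFan.sdiff_subset_nbF (F : SimplicialFan ι κ) {τ σ : Finset ι}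
    (hσ : σ ∈ F.cones) (hτσ : τ ⊆ σ) : σ \ τ ⊆ nbF F.cones τ := by
  intro ρ hρ
  rw [mem_sdiff] at hρ
  exact mem_filter.2 ⟨mem_univ _, hρ.2, F.downward σ hσ _ (insert_subset hρ.1 hτσ)⟩

lemma disjoint_nbF (cones : Finset (Finset ι)) (τ : Finset ι) : Disjoint (nbF cones τ) τ :=
  disjoint_left.2 fun _ hρ => (mem_filter.1 hρ).2.1

lemma filter_card_starCones (F : SimplicialFan ι κ) {τ : Finset ι} {d k : ℕ}
    (hτ : τ.card = k) (hkd : k ≤ d) :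
    (starCones F.cones τ (nbF F.cones τ)).filter (fun σ' => σ'.card = d - k) =
      (F.cones.filter fun σ => σ.card = d ∧ τ ⊆ σ).image
        fun σ => (σ \ τ).subtype (· ∈ nbF F.cones τ) := by
  rw [starCones, filter_image, filter_filter]
  congr 1
  refine filter_congr fun σ hσ => ?_
  by_cases hτσ : τ ⊆ σ
  · rw [card_subtype_of_subset (F.sdiff_subset_nbF hσ hτσ), card_sdiff_of_subset hτσ, hτ]
    have := hτ ▸ card_le_card hτσ
    simp only [hτσ, true_and, and_true]
    omega
  · simp [hτσ]

end StarCones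

theorem statement1_general {ι : Type*} [Fintype ι] [DecidableEq ι] {d k : ℕ}
    (F : SimplicialFan ι (Fin d))
    (τ : Finset ι) (hcard : τ.card = k)
    (T : Matrix (Fin d) (Fin d) ℝ) (hdet : T.det ≠ 0) (hT : RowsStd F.U T τ k) :
    restrictTo τ (Adj F.U F.cones) =
      MvPolynomial.C |T.det|⁻¹ * (∏ ρ ∈ (nbF F.cones τ ∪ τ)ᶜ, MvPolynomial.X ρ) *
        MvPolynomial.rename Subtype.val
          (Adj (starU F.U T (nbF F.cones τ) k) (starCones F.cones τ (nbF F.cones τ))) := by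
  have hkd : k ≤ d := hcard ▸ hT.card_le
  rw [restrictTo_Adj, Adj]
  simp only [Fin.card_subtype_le_val hkd, Fintype.card_fin]
  rw [filter_card_starCones F hcard hkd, sum_image, map_sum, mul_sum]
  · refine sum_congr rfl fun σ hσ => ?_
    obtain ⟨hσF, hσd, hτσ⟩ : σ ∈ F.cones ∧ σ.card = d ∧ τ ⊆ σ := by simpa [and_assoc] using hσ
    have hσN := F.sdiff_subset_nbF hσF hτσ
    rw [prod_X_compl_eq_mul_rename hτσ hσN (disjoint_nbF _ _),
      ← absDetRows_mul_eq_absDetRows_starU F.U T hT hcard hτσ hσN hσd, absDetRows_mul,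
      map_mul, rename_C]
    have hC : C |T.det|⁻¹ * C (absDetRows F.U σ * |T.det|) =
        (C (absDetRows F.U σ) : MvPolynomial ι ℝ) := by
      rw [← C_mul, mul_comm (absDetRows _ _), inv_mul_cancel_left₀ (abs_ne_zero.2 hdet)]
    rw [← hC]
    ring
  · intro σ₁ h₁ σ₂ h₂
    simp only [coe_filter, Set.mem_ofPred_eq] at h₁ h₂
    exact eq_of_subtype_sdiff_eq h₁.2.2 h₂.2.2 (F.sdiff_subset_nbF h₁.1 h₁.2.2)
      (F.sdiff_subset_nbF h₂.1 h₂.2.2)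

/-- (Restriction to a coordinate subspace.) Let `τ ∈ Σ(k)` and let
`T_τ` be an invertible matrix such that the rows of `U·T_τ` indexed by `τ` are the
first `k` standard basis vectors; let `c_τ = |det T_τ|` and let `U_τ` be the ray matrix
of the star fan `Σ_τ` (the last `d-k` columns of `U·T_τ` on the rows indexed by `nb(τ)`).
Then the restriction of `Adj_{Σ,U}` to `Λ_τ = {x_ρ = 0, ρ ∈ τ}` equals
`c_τ⁻¹ · (∏_{ρ ∉ nb(τ), ρ ∉ τ} x_ρ) · Adj_{Σ_τ,U_τ}`. -/
theorem statement1 {ι : Type*} [Fintype ι] [DecidableEq ι] {d k : ℕ}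
    (F : SimplicialFan ι (Fin d)) (hrank : F.U.rank = d)
    (τ : Finset ι) (hτ : τ ∈ F.cones) (hcard : τ.card = k)
    (T : Matrix (Fin d) (Fin d) ℝ) (hdet : T.det ≠ 0) (hT : RowsStd F.U T τ k) :
    restrictTo τ (Adj F.U F.cones) =
      MvPolynomial.C |T.det|⁻¹ * (∏ ρ ∈ (nbF F.cones τ ∪ τ)ᶜ, MvPolynomial.X ρ) *
        MvPolynomial.rename Subtype.val
          (Adj (starU F.U T (nbF F.cones τ) k) (starCones F.cones τ (nbF F.cones τ))) :=
  statement1_general F τ hcard T hdet hT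
end

section
/- Let P ⊆ ℝ^d be a full-dimensional simple convex polytope with n facets, normal fan Σ = Σ_P, and ray matrix U ∈ ℝ^{n×d}. Then the universal adjoint hypersurface A_P = {x ∈ ℙ^{n−1} : Adj_P(x) = 0} is the unique hypersurface of degree n−d satisfying: (1) Λ_J ⊆ A_P for each primitive collection J ∈ Σ^c, and (2) Λ_e ∩ H_e ⊆ A_P for each edge e of P, where H_e = {x : u_{v_e^1}·x_{Q_e^2} + u_{v_e^2}·x_{Q_e^1} = 0}. That is, any homogeneous polynomial f of degree n−d vanishing on all the subspaces Λ_J and Λ_e ∩ H_e is a scalar multiple of Adj_P. -/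
open MvPolynomial Finset MeasureTheory
open scoped ENNReal

/-! A monomial `x^m` of `f` whose set of missing variables is not a cone of `Σ` would miss
all variables of some primitive collection `J`, and vanishing on `Λ_J` forbids that. Since cones
have at most `d` rays and `f` has degree `n - d`, this forces `f = ∑_{σ ∈ Σ(d)} c_σ ∏_{ρ ∉ σ} x_ρ`.
Restricting `f` to `Λ_e ∩ H_e` for the edge `e` with normal cone `τ = σ₁ ∩ σ₂` gives
`u_{σ₂} c_{σ₁} = u_{σ₁} c_{σ₂}`, so `c_σ / u_σ` is constant along the edges of `P`. The graph of
`P` is connected: every vertex is the unique maximizer of a linear functional on `P`, and the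
simplex method climbs to it along edges. -/

open Matrix

section SquarefreeMonomial

variable {ι : Type*}

noncomputable def indicatorExp (s : Finset ι) : ι →₀ ℕ := ∑ i ∈ s, Finsupp.single i 1

lemma indicatorExp_apply [DecidableEq ι] (s : Finset ι) (i : ι) :
    indicatorExp s i = if i ∈ s then 1 else 0 := by
  simp [indicatorExp, Finsupp.finsetSum_apply, Finsupp.single_apply]

lemma support_indicatorExp (s : Finset ι) : (indicatorExp s).support = s := by
  classical
  ext i
  simp [indicatorExp_apply]

lemma indicatorExp_injective : Function.Injective (indicatorExp (ι := ι)) := fun s t h => by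
  rw [← support_indicatorExp s, h, support_indicatorExp]

lemma card_support_le_degree (m : ι →₀ ℕ) : m.support.card ≤ m.degree := by
  rw [Finsupp.degree_apply, card_eq_sum_ones]
  exact sum_le_sum fun i hi => Nat.one_le_iff_ne_zero.2 (Finsupp.mem_support_iff.1 hi)

lemma eq_indicatorExp_support_of_degree_le {m : ι →₀ ℕ} (h : m.degree ≤ m.support.card) :
    m = indicatorExp m.support := by
  classical
  have hone : ∀ i ∈ m.support, 1 = m i := by
    rw [← sum_eq_sum_iff_of_le fun i hi => Nat.one_le_iff_ne_zero.2 (Finsupp.mem_support_iff.1 hi),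
      ← card_eq_sum_ones]
    exact le_antisymm (card_support_le_degree m) h
  ext i
  rw [indicatorExp_apply]
  split_ifs with hi
  · exact (hone i hi).symm
  · exact Finsupp.notMem_support_iff.1 hi

variable {R : Type*} [CommSemiring R]

lemma monomial_indicatorExp (s : Finset ι) (a : R) :
    monomial (indicatorExp s) a = C a * ∏ i ∈ s, X i :=
  monomial_sum_index s _ a

lemma eval_monomial_indicatorExp (s : Finset ι) (a : R) (x : ι → R) :
    eval x (monomial (indicatorExp s) a) = a * ∏ i ∈ s, x i := by
  simp [monomial_indicatorExp]

lemma eq_sum_monomial_indicatorExp [Fintype ι] [DecidableEq ι] {f : MvPolynomial ι R}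
    {V : Finset (Finset ι)} (hf : ∀ m ∈ f.support, ∃ σ ∈ V, m = indicatorExp σᶜ) :
    f = ∑ σ ∈ V, monomial (indicatorExp σᶜ) (coeff (indicatorExp σᶜ) f) := by
  have hinj : Set.InjOn (fun σ : Finset ι => indicatorExp σᶜ) V :=
    fun σ _ τ _ h => compl_injective (indicatorExp_injective h)
  rw [← sum_image (f := fun m => monomial m (coeff m f)) hinj]
  conv_lhs => rw [f.as_sum]
  refine sum_subset (fun m hm => ?_) fun m _ hm => ?_
  · obtain ⟨σ, hσ, rfl⟩ := hf m hm
    exact mem_image_of_mem _ hσ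
  · rw [notMem_support_iff.1 hm, monomial_zero]

end SquarefreeMonomial

-- `bind₁ g` sets the variables of `s` to zero and is the identity modulo `⟨X i | i ∈ s⟩`.
theorem MvPolynomial.mem_ideal_span_X_image_of_eval_eq_zero {ι R : Type*} [CommRing R]
    [IsDomain R] [Infinite R] {s : Set ι} {f : MvPolynomial ι R}
    (h : ∀ x : ι → R, (∀ i ∈ s, x i = 0) → eval x f = 0) :
    f ∈ Ideal.span (X '' s) := by
  classical
  set I : Ideal (MvPolynomial ι R) := Ideal.span (X '' s)
  set g : ι → MvPolynomial ι R := fun i => if i ∈ s then 0 else X i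
  have hgf : bind₁ g f = 0 := MvPolynomial.funext fun x => by
    rw [map_zero, eval, eval₂Hom_bind₁]
    exact h _ fun i hi => by simp [g, hi]
  have hg : (Ideal.Quotient.mkₐ R I).comp (bind₁ g) = Ideal.Quotient.mkₐ R I := by
    refine MvPolynomial.algHom_ext fun i => ?_
    by_cases hi : i ∈ s
    · simpa [g, hi, eq_comm (a := (0 : MvPolynomial ι R ⧸ I)), Ideal.Quotient.eq_zero_iff_mem]
        using Ideal.subset_span (Set.mem_image_of_mem X hi)
    · simp [g, hi]
  simpa [hgf] using Ideal.Quotient.eq.1 (DFunLike.congr_fun hg f)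

def IsPrimitiveCollection {ι : Type*} [DecidableEq ι] (cones : Finset (Finset ι))
    (J : Finset ι) : Prop :=
  (∀ σ ∈ cones, ¬ J ⊆ σ) ∧ ∀ ρ ∈ J, ∃ σ ∈ cones, J.erase ρ ⊆ σ

lemma exists_isPrimitiveCollection_subset {ι : Type*} [DecidableEq ι]
    (cones : Finset (Finset ι)) {S : Finset ι} (hS : ∀ σ ∈ cones, ¬ S ⊆ σ) :
    ∃ J ⊆ S, IsPrimitiveCollection cones J := by
  obtain ⟨J, hJS, hJ⟩ :=
    exists_minimal_le_of_wellFoundedLT (fun J => ∀ σ ∈ cones, ¬ J ⊆ σ) S hS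
  refine ⟨J, hJS, hJ.prop, fun ρ hρ => ?_⟩
  by_contra! h
  exact hJ.not_prop_of_lt (erase_ssubset hρ) h

section Wall

variable {ι K : Type*} [DecidableEq ι]

lemma Finset.eq_insert_of_mem_sdiff {τ σ : Finset ι} (hτσ : τ ⊆ σ) (hcard : σ.card ≤ τ.card + 1)
    {ρ : ι} (hρ : ρ ∈ σ \ τ) : σ = insert ρ τ :=
  (eq_of_subset_of_card_le (insert_subset (mem_sdiff.1 hρ).1 hτσ)
    (by rwa [card_insert_of_notMem (mem_sdiff.1 hρ).2])).symm

def wallPoint [Zero K] [One K] (τ : Finset ι) (ρ₁ ρ₂ : ι) (b₁ b₂ : K) : ι → K :=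
  fun ρ => if ρ ∈ τ then 0 else if ρ = ρ₁ then b₁ else if ρ = ρ₂ then b₂ else 1

variable [Fintype ι] [CommMonoidWithZero K] {τ σ : Finset ι} {ρ₁ ρ₂ : ι}

lemma prod_compl_wallPoint_of_subset (hρ : ρ₁ ≠ ρ₂) (h₁ : ρ₁ ∉ τ) (h₂ : ρ₂ ∉ τ) (hτσ : τ ⊆ σ)
    (b₁ b₂ : K) : ∏ ρ ∈ σᶜ, wallPoint τ ρ₁ ρ₂ b₁ b₂ ρ =
      (if ρ₁ ∈ σ then 1 else b₁) * (if ρ₂ ∈ σ then 1 else b₂) := by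
  rw [← Fintype.prod_extend_by_one, Fintype.prod_eq_mul ρ₁ ρ₂ hρ]
  · simp [wallPoint, h₁, h₂, hρ.symm]
  · intro ρ hρ'
    by_cases hρσ : ρ ∈ σ
    · simp [hρσ]
    · have hρτ : ρ ∉ τ := fun h => hρσ (hτσ h)
      simp [wallPoint, hρσ, hρτ, hρ'.1, hρ'.2]

lemma prod_compl_wallPoint_of_not_subset (hτσ : ¬ τ ⊆ σ) (b₁ b₂ : K) :
    ∏ ρ ∈ σᶜ, wallPoint τ ρ₁ ρ₂ b₁ b₂ ρ = 0 :=
  let ⟨_, hρτ, hρσ⟩ := not_subset.1 hτσ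
  prod_eq_zero (mem_compl.2 hρσ) (if_pos hρτ)

end Wall

-- On the line `t ↦ wallPoint τ ρ₁ ρ₂ (a₁ t) (-a₂ t)` inside the wall, the terms of `σ₁` and `σ₂`
-- are linear in `t` and all the others are even, so `t = ±1` isolate `a₂ c σ₁ - a₁ c σ₂`.
theorem mul_eq_mul_of_vanishing_on_wall {ι K : Type*} [Fintype ι] [DecidableEq ι] [Field K]
    [CharZero K] {V : Finset (Finset ι)} {d : ℕ} (hV : ∀ σ ∈ V, σ.card = d) (c : Finset ι → K)
    {τ σ₁ σ₂ : Finset ι} (hσ₁ : σ₁ ∈ V) (hσ₂ : σ₂ ∈ V) (hne : σ₁ ≠ σ₂) (hτ : τ.card = d - 1)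
    (hτ₁ : τ ⊆ σ₁) (hτ₂ : τ ⊆ σ₂) (a₁ a₂ : K)
    (hvan : ∀ ρ₁ ∈ σ₁ \ τ, ∀ ρ₂ ∈ σ₂ \ τ, ∀ x : ι → K, (∀ ρ ∈ τ, x ρ = 0) →
      a₁ * x ρ₂ + a₂ * x ρ₁ = 0 → ∑ σ ∈ V, c σ * ∏ ρ ∈ σᶜ, x ρ = 0) :
    a₂ * c σ₁ = a₁ * c σ₂ := by
  have hd : 1 ≤ d := by
    by_contra! h
    have hempty : ∀ σ ∈ V, σ = ∅ := fun σ hσ => card_eq_zero.1 ((hV σ hσ).trans (by omega))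
    exact hne ((hempty σ₁ hσ₁).trans (hempty σ₂ hσ₂).symm)
  have eq_of_mem : ∀ σ ∈ V, τ ⊆ σ → ∀ σ' ∈ V, τ ⊆ σ' → ∀ ρ ∈ σ' \ τ, ρ ∈ σ → σ = σ' :=
    fun σ hσ hτσ σ' hσ' hτσ' ρ hρ hρσ =>
      (eq_insert_of_mem_sdiff hτσ (by rw [hV σ hσ, hτ]; omega)
        (mem_sdiff.2 ⟨hρσ, (mem_sdiff.1 hρ).2⟩)).trans
        (eq_insert_of_mem_sdiff hτσ' (by rw [hV σ' hσ', hτ]; omega) hρ).symm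
  have exists_mem : ∀ σ ∈ V, ∃ ρ, ρ ∈ σ \ τ := fun σ hσ => by
    obtain ⟨ρ, hρσ, hρτ⟩ := exists_mem_notMem_of_card_lt_card (s := τ) (t := σ)
      (by rw [hV σ hσ, hτ]; omega)
    exact ⟨ρ, mem_sdiff.2 ⟨hρσ, hρτ⟩⟩
  obtain ⟨ρ₁, hρ₁⟩ := exists_mem σ₁ hσ₁
  obtain ⟨ρ₂, hρ₂⟩ := exists_mem σ₂ hσ₂
  obtain ⟨hρ₁σ₁, hρ₁τ⟩ := mem_sdiff.1 hρ₁
  obtain ⟨hρ₂σ₂, hρ₂τ⟩ := mem_sdiff.1 hρ₂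
  have hρ₁σ₂ : ρ₁ ∉ σ₂ := fun h => hne (eq_of_mem σ₂ hσ₂ hτ₂ σ₁ hσ₁ hτ₁ ρ₁ hρ₁ h).symm
  have hρ₂σ₁ : ρ₂ ∉ σ₁ := fun h => hne (eq_of_mem σ₁ hσ₁ hτ₁ σ₂ hσ₂ hτ₂ ρ₂ hρ₂ h)
  have hρ : ρ₁ ≠ ρ₂ := fun h => hρ₁σ₂ (h ▸ hρ₂σ₂)
  have hprod := fun {σ} (hτσ : τ ⊆ σ) (t : K) =>
    prod_compl_wallPoint_of_subset hρ hρ₁τ hρ₂τ hτσ (a₁ * t) (-(a₂ * t))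
  have hsum : ∀ t, ∑ σ ∈ V, c σ * ∏ ρ ∈ σᶜ, wallPoint τ ρ₁ ρ₂ (a₁ * t) (-(a₂ * t)) ρ = 0 :=
    fun t => hvan ρ₁ hρ₁ ρ₂ hρ₂ _ (fun ρ hρ => if_pos hρ)
      (by simp [wallPoint, hρ₁τ, hρ₂τ, hρ.symm]; ring)
  have key := congrArg₂ (· - ·) (hsum 1) (hsum (-1))
  rw [sub_self, ← sum_sub_distrib, sum_eq_add_of_mem σ₁ σ₂ hσ₁ hσ₂ hne] at key
  · simp only [hprod hτ₁, hprod hτ₂, hρ₁σ₁, hρ₂σ₁, hρ₁σ₂, hρ₂σ₂, ↓reduceIte] at key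
    linear_combination -key / 2
  · intro σ hσ hσne
    by_cases hτσ : τ ⊆ σ
    · have h₁ : ρ₁ ∉ σ := fun h => hσne.1 (eq_of_mem σ hσ hτσ σ₁ hσ₁ hτ₁ ρ₁ hρ₁ h)
      have h₂ : ρ₂ ∉ σ := fun h => hσne.2 (eq_of_mem σ hσ hτσ σ₂ hσ₂ hτ₂ ρ₂ hρ₂ h)
      simp only [hprod hτσ, h₁, h₂, ↓reduceIte]
      ring
    · simp [prod_compl_wallPoint_of_not_subset hτσ]

theorem Relation.reflTransGen_of_exists_lt {α β : Type*} [Preorder β] {r : α → α → Prop}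
    {s : Finset α} (φ : α → β) {b : α} (h : ∀ a ∈ s, a ≠ b → ∃ a' ∈ s, r a a' ∧ φ a < φ a')
    {a : α} (ha : a ∈ s) : Relation.ReflTransGen r a b := by
  classical
  induction hn : (s.filter fun x => φ a < φ x).card using Nat.strong_induction_on
    generalizing a with
  | _ n ih =>
    by_cases hab : a = b
    · exact hab ▸ .refl
    obtain ⟨a', ha', hr, hlt⟩ := h a ha hab
    refine .head hr (ih _ ?_ ha' rfl)
    rw [← hn]
    refine card_lt_card ⟨fun x hx => ?_, fun hsub => ?_⟩
    · rw [mem_filter] at hx ⊢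
      exact ⟨hx.1, hlt.trans hx.2⟩
    · exact lt_irrefl _ (mem_filter.1 (hsub (mem_filter.2 ⟨ha', hlt⟩))).2

section Polyhedron

variable {ι κ : Type*} [Fintype κ]

lemma mem_Pz_iff {U : Matrix ι κ ℝ} {z : ι → ℝ} {y : κ → ℝ} :
    y ∈ Pz U z ↔ 0 ≤ U *ᵥ y + z := Iff.rfl

lemma mem_faceOf_iff {U : Matrix ι κ ℝ} {z : ι → ℝ} {σ : Finset ι} {y : κ → ℝ} :
    y ∈ faceOf U z σ ↔ 0 ≤ U *ᵥ y + z ∧ ∀ i ∈ σ, (U *ᵥ y + z) i = 0 := Iff.rfl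

lemma mulVec_add_smul_add_apply (U : Matrix ι κ ℝ) (z : ι → ℝ) (y W : κ → ℝ) (t : ℝ) (i : ι) :
    (U *ᵥ (y + t • W) + z) i = (U *ᵥ y + z) i + t * (U *ᵥ W) i := by
  simp only [mulVec_add, mulVec_smul, Pi.add_apply, Pi.smul_apply, smul_eq_mul]
  ring

lemma exists_mulVec_neg_of_isBounded {U : Matrix ι κ ℝ} {z : ι → ℝ}
    (hb : Bornology.IsBounded (Pz U z)) {y W : κ → ℝ} (hy : y ∈ Pz U z) (hW : W ≠ 0) :
    ∃ i, (U *ᵥ W) i < 0 := by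
  by_contra! hUW
  obtain ⟨C, hC⟩ := isBounded_iff_forall_norm_le.1 hb
  have hray : ∀ t : ℝ, 0 ≤ t → y + t • W ∈ Pz U z := fun t ht => mem_Pz_iff.2 fun i => by
    rw [Pi.zero_apply, mulVec_add_smul_add_apply]
    exact add_nonneg (hy i) (mul_nonneg ht (hUW i))
  have hWpos : 0 < ‖W‖ := norm_pos_iff.2 hW
  set t := (2 * C + 1) / ‖W‖
  have ht : 0 ≤ t := div_nonneg (by linarith [norm_nonneg y, hC y hy]) hWpos.le
  have hnorm : ‖t • W‖ = 2 * C + 1 := by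
    rw [norm_smul, Real.norm_of_nonneg ht, div_mul_cancel₀ _ hWpos.ne']
  have := norm_sub_le (y + t • W) y
  rw [add_sub_cancel_left, hnorm] at this
  linarith [hC _ (hray t ht), hC y hy]

lemma exists_exit_point [Fintype ι] {U : Matrix ι κ ℝ} {z : ι → ℝ} {y W : κ → ℝ}
    (hy : y ∈ Pz U z) (hW : ∃ i, (U *ᵥ W) i < 0) :
    ∃ t : ℝ, 0 ≤ t ∧ y + t • W ∈ Pz U z ∧
      ∃ i, (U *ᵥ W) i < 0 ∧ (U *ᵥ (y + t • W) + z) i = 0 := by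
  classical
  obtain ⟨i₀, hi₀, hmin⟩ := (univ.filter fun i => (U *ᵥ W) i < 0).exists_min_image
    (fun i => (U *ᵥ y + z) i / -(U *ᵥ W) i) (by simpa [Finset.Nonempty] using hW)
  have hi₀ : (U *ᵥ W) i₀ < 0 := (mem_filter.1 hi₀).2
  set t := (U *ᵥ y + z) i₀ / -(U *ᵥ W) i₀
  have ht : 0 ≤ t := div_nonneg (hy i₀) (neg_nonneg.2 hi₀.le)
  refine ⟨t, ht, mem_Pz_iff.2 fun i => ?_, i₀, hi₀, ?_⟩
  · rw [Pi.zero_apply, mulVec_add_smul_add_apply]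
    rcases le_or_gt 0 ((U *ᵥ W) i) with h | h
    · exact add_nonneg (hy i) (mul_nonneg ht h)
    · have := (le_div_iff₀ (neg_pos.2 h)).1 (hmin i (by simp [h]))
      linarith
  · have : t * -(U *ᵥ W) i₀ = (U *ᵥ y + z) i₀ := div_mul_cancel₀ _ (neg_ne_zero.2 hi₀.ne)
    rw [mulVec_add_smul_add_apply]
    linarith

variable [Fintype ι] {U : Matrix ι κ ℝ} {z : ι → ℝ}

noncomputable def tightSet (U : Matrix ι κ ℝ) (z : ι → ℝ) (y : κ → ℝ) : Finset ι :=
  univ.filter fun i => (U *ᵥ y + z) i = 0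

lemma mem_tightSet {y : κ → ℝ} {i : ι} : i ∈ tightSet U z y ↔ (U *ᵥ y + z) i = 0 := by
  simp [tightSet]

lemma mem_faceOf_tightSet {y : κ → ℝ} (hy : y ∈ Pz U z) : y ∈ faceOf U z (tightSet U z y) :=
  ⟨hy, fun _ hi => mem_tightSet.1 hi⟩

lemma subset_tightSet {σ : Finset ι} {y : κ → ℝ} (hy : y ∈ faceOf U z σ) : σ ⊆ tightSet U z y :=
  fun i hi => mem_tightSet.2 (hy.2 i hi)

end Polyhedron

namespace SimplicialFan

variable {ι κ : Type*} [Fintype ι] [DecidableEq ι] [Fintype κ] (F : SimplicialFan ι κ)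

def maxCones : Finset (Finset ι) := F.cones.filter fun σ => σ.card = Fintype.card κ

def Adjacent (σ₁ σ₂ : Finset ι) : Prop :=
  σ₁ ∈ F.maxCones ∧ σ₂ ∈ F.maxCones ∧ σ₁ ≠ σ₂ ∧
    ∃ τ ∈ F.cones, τ.card = Fintype.card κ - 1 ∧ τ ⊆ σ₁ ∧ τ ⊆ σ₂

variable {F}

lemma card_le_of_mem_cones_s9 {σ : Finset ι} (hσ : σ ∈ F.cones) : σ.card ≤ Fintype.card κ := by
  simpa using (F.indep σ hσ).fintype_card_le_finrank

lemma exists_mem_maxCones_eq_indicatorExp {R : Type*} [CommRing R] [IsDomain R] [Infinite R]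
    (hdn : Fintype.card κ ≤ Fintype.card ι) {f : MvPolynomial ι R}
    (hdeg : f.IsHomogeneous (Fintype.card ι - Fintype.card κ))
    (hJ : ∀ J, IsPrimitiveCollection F.cones J → ∀ x : ι → R, (∀ ρ ∈ J, x ρ = 0) → eval x f = 0)
    {m : ι →₀ ℕ} (hm : m ∈ f.support) : ∃ σ ∈ F.maxCones, m = indicatorExp σᶜ := by
  obtain ⟨σ, hσ, hsub⟩ : ∃ σ ∈ F.cones, m.supportᶜ ⊆ σ := by
    by_contra! h
    obtain ⟨J, hJS, hJprim⟩ := exists_isPrimitiveCollection_subset F.cones h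
    obtain ⟨i, hiJ, hmi⟩ :=
      mem_ideal_span_X_image.1 (mem_ideal_span_X_image_of_eval_eq_zero (hJ J hJprim)) m hm
    exact mem_compl.1 (hJS hiJ) (Finsupp.mem_support_iff.2 hmi)
  have hdegm : m.degree = Fintype.card ι - Fintype.card κ := by
    rw [Finsupp.degree_eq_weight_one]
    exact hdeg (mem_support_iff.1 hm)
  have hcard : m.supportᶜ.card ≤ Fintype.card κ :=
    (card_le_card hsub).trans (card_le_of_mem_cones_s9 hσ)
  have hle := card_support_le_degree m
  rw [card_compl] at hcard
  refine ⟨m.supportᶜ, mem_filter.2 ⟨F.downward σ hσ _ hsub, ?_⟩, ?_⟩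
  · rw [card_compl]
    omega
  · rw [compl_compl]
    exact eq_indicatorExp_support_of_degree_le (by omega)

lemma absDetRows_ne_zero [DecidableEq κ] {σ : Finset ι} (hσ : σ ∈ F.maxCones) :
    absDetRows F.U σ ≠ 0 := by
  obtain ⟨hσ, hcard⟩ := mem_filter.1 hσ
  rw [absDetRows, dif_pos hcard, abs_ne_zero, ← isUnit_iff_ne_zero,
    ← Matrix.isUnit_iff_isUnit_det, ← Matrix.linearIndependent_rows_iff_isUnit]
  exact (F.indep σ hσ).comp _
    (σ.equivFin.symm.injective.comp (Fintype.equivFinOfCardEq hcard.symm).injective)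

variable (F) in
def rowMap (σ : Finset ι) : (κ → ℝ) →ₗ[ℝ] (σ → ℝ) := (F.U.submatrix (↑) id).mulVecLin

lemma rowMap_apply (σ : Finset ι) (y : κ → ℝ) (ρ : σ) : F.rowMap σ y ρ = (F.U *ᵥ y) ρ := rfl

lemma rowMap_bijective {σ : Finset ι} (hσ : σ ∈ F.maxCones) :
    Function.Bijective (F.rowMap σ) := by
  obtain ⟨hσ, hcard⟩ := mem_filter.1 hσ
  have hsurj : Function.Surjective (F.rowMap σ) := by
    rw [← LinearMap.range_eq_top]
    refine Submodule.eq_top_of_finrank_eq ?_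
    have hrank : (F.U.submatrix ((↑) : σ → ι) id).rank = Fintype.card σ :=
      LinearIndependent.rank_matrix (F.indep σ hσ)
    rw [Module.finrank_fintype_fun_eq_card, ← hrank]
    rfl
  refine ⟨(LinearMap.injective_iff_surjective_of_finrank_eq_finrank ?_).2 hsurj, hsurj⟩
  simp [hcard]

lemma exists_pivot {σ : Finset ι} (hσ : σ ∈ F.maxCones) {u w : κ → ℝ}
    (hw : ∀ ρ ∈ σ, 0 ≤ (F.U *ᵥ w) ρ) (huw : 0 < u ⬝ᵥ w) :
    ∃ ρ₀ ∈ σ, ∃ W : κ → ℝ, (∀ ρ ∈ σ, (F.U *ᵥ W) ρ = if ρ = ρ₀ then 1 else 0) ∧ 0 < u ⬝ᵥ W := by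
  let L := LinearEquiv.ofBijective (F.rowMap σ) (rowMap_bijective hσ)
  let W : σ → κ → ℝ := fun ρ => L.symm (Pi.single ρ 1)
  have hLW : ∀ ρ, F.rowMap σ (W ρ) = Pi.single ρ 1 := fun ρ => L.apply_symm_apply _
  have hw_eq : w = ∑ ρ, F.rowMap σ w ρ • W ρ := by
    refine (rowMap_bijective hσ).1 ?_
    ext ρ'
    simp [map_sum, hLW, Finset.sum_apply, Pi.single_apply]
  have hsum : ∑ _ρ : σ, (0 : ℝ) < ∑ ρ, F.rowMap σ w ρ * (u ⬝ᵥ W ρ) := by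
    convert huw using 1
    · exact sum_const_zero
    · conv_rhs => rw [hw_eq]
      simp [dotProduct_sum, dotProduct_smul]
  obtain ⟨ρ₀, -, hρ₀⟩ := exists_lt_of_sum_lt hsum
  refine ⟨ρ₀, ρ₀.2, W ρ₀, fun ρ hρ => ?_, pos_of_mul_pos_right hρ₀ (hw ρ₀ ρ₀.2)⟩
  rw [← rowMap_apply σ _ ⟨ρ, hρ⟩, hLW, Pi.single_apply]
  simp [Subtype.ext_iff]

lemma eq_of_mem_faceOf {z : ι → ℝ} {σ : Finset ι} (hσ : σ ∈ F.maxCones) {y y' : κ → ℝ}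
    (hy : y ∈ faceOf F.U z σ) (hy' : y' ∈ faceOf F.U z σ) : y = y' :=
  (rowMap_bijective hσ).1 <| funext fun ρ => by
    have h := (mem_faceOf_iff.1 hy).2 ρ ρ.2
    have h' := (mem_faceOf_iff.1 hy').2 ρ ρ.2
    rw [Pi.add_apply] at h h'
    rw [rowMap_apply, rowMap_apply]
    linarith

variable (F) in
open scoped Classical in
noncomputable def vertex (z : ι → ℝ) (σ : Finset ι) : κ → ℝ :=
  if h : (faceOf F.U z σ).Nonempty then h.some else 0

end SimplicialFan

namespace IsNormalFanOf

open SimplicialFan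

variable {ι κ : Type*} [Fintype ι] [DecidableEq ι] [Fintype κ] {F : SimplicialFan ι κ}
  {z : ι → ℝ} (hz : IsNormalFanOf F z)
include hz

lemma tightSet_mem_cones {y : κ → ℝ} (hy : y ∈ Pz F.U z) : tightSet F.U z y ∈ F.cones :=
  (hz.2.2 _).2 ⟨y, mem_faceOf_tightSet hy⟩

lemma tightSet_eq {σ : Finset ι} (hσ : σ ∈ F.maxCones) {y : κ → ℝ} (hy : y ∈ faceOf F.U z σ) :
    tightSet F.U z y = σ := by
  refine (eq_of_subset_of_card_le (subset_tightSet hy) ?_).symm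
  rw [(mem_filter.1 hσ).2]
  exact card_le_of_mem_cones_s9 (hz.tightSet_mem_cones hy.1)

lemma vertex_mem_faceOf {σ : Finset ι} (hσ : σ ∈ F.cones) : F.vertex z σ ∈ faceOf F.U z σ := by
  rw [vertex, dif_pos ((hz.2.2 σ).1 hσ)]
  exact Set.Nonempty.some_mem _

lemma eq_vertex {σ : Finset ι} (hσ : σ ∈ F.maxCones) {y : κ → ℝ} (hy : y ∈ faceOf F.U z σ) :
    y = F.vertex z σ :=
  eq_of_mem_faceOf hσ hy (hz.vertex_mem_faceOf (mem_filter.1 hσ).1)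

-- One pivot of the simplex method: leave the vertex of `σ` along the edge direction `W` that
-- increases `u`, until a new facet `i₀` becomes tight.
lemma exists_edge_step (u : κ → ℝ) {σ : Finset ι} (hσ : σ ∈ F.maxCones) {y : κ → ℝ}
    (hy : y ∈ Pz F.U z) (hlt : u ⬝ᵥ F.vertex z σ < u ⬝ᵥ y) :
    ∃ ρ₀ ∈ σ, ∃ i₀ ∉ σ, ∃ b ∈ Pz F.U z, u ⬝ᵥ F.vertex z σ < u ⬝ᵥ b ∧
      (F.U *ᵥ b + z) i₀ = 0 ∧ ∀ ρ ∈ σ.erase ρ₀, (F.U *ᵥ b + z) ρ = 0 := by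
  set v := F.vertex z σ
  have hv : v ∈ faceOf F.U z σ := hz.vertex_mem_faceOf (mem_filter.1 hσ).1
  obtain ⟨ρ₀, hρ₀, W, hWσ, huW⟩ := exists_pivot hσ (w := y - v) (fun ρ hρ => by
      have h₁ : 0 ≤ (F.U *ᵥ y) ρ + z ρ := hy ρ
      have h₂ : (F.U *ᵥ v) ρ + z ρ = 0 := hv.2 ρ hρ
      rw [mulVec_sub, Pi.sub_apply]
      linarith) (by rw [dotProduct_sub]; linarith)
  have hW : W ≠ 0 := fun h => by simpa [h] using hWσ ρ₀ hρ₀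
  obtain ⟨i, hi⟩ := exists_mulVec_neg_of_isBounded hz.1 hv.1 hW
  obtain ⟨t, ht, hb, i₀, hi₀, hi₀b⟩ := exists_exit_point hv.1 ⟨i, hi⟩
  have hi₀σ : i₀ ∉ σ := fun h => by
    have := hWσ i₀ h
    split_ifs at this <;> linarith
  have htpos : 0 < t := ht.lt_of_ne fun h => hi₀σ <| by
    rw [← hz.tightSet_eq hσ hv, mem_tightSet]
    simpa [← h] using hi₀b
  refine ⟨ρ₀, hρ₀, i₀, hi₀σ, v + t • W, hb, ?_, hi₀b, fun ρ hρ => ?_⟩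
  · rw [dotProduct_add, dotProduct_smul, smul_eq_mul]
    linarith [mul_pos htpos huW]
  · rw [mulVec_add_smul_add_apply, (mem_faceOf_iff.1 hv).2 ρ (mem_of_mem_erase hρ),
      hWσ ρ (mem_of_mem_erase hρ), if_neg (ne_of_mem_erase hρ)]
    ring

lemma exists_adjacent_lt (u : κ → ℝ) {σ : Finset ι} (hσ : σ ∈ F.maxCones) {y : κ → ℝ}
    (hy : y ∈ Pz F.U z) (hlt : u ⬝ᵥ F.vertex z σ < u ⬝ᵥ y) :
    ∃ σ', F.Adjacent σ σ' ∧ u ⬝ᵥ F.vertex z σ < u ⬝ᵥ F.vertex z σ' := by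
  obtain ⟨hσc, hcard⟩ := mem_filter.1 hσ
  obtain ⟨ρ₀, hρ₀, i₀, hi₀σ, b, hb, hub, hi₀b, hτb⟩ := hz.exists_edge_step u hσ hy hlt
  set τ := σ.erase ρ₀
  have hτcard : τ.card = Fintype.card κ - 1 := by rw [card_erase_of_mem hρ₀, hcard]
  set σ' := tightSet F.U z b
  have hσ'c : σ' ∈ F.cones := hz.tightSet_mem_cones hb
  have hsub : insert i₀ τ ⊆ σ' :=
    insert_subset (mem_tightSet.2 hi₀b) fun ρ hρ => mem_tightSet.2 (hτb ρ hρ)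
  have hσ' : σ' ∈ F.maxCones := by
    refine mem_filter.2 ⟨hσ'c, le_antisymm (card_le_of_mem_cones_s9 hσ'c) ?_⟩
    have h₁ := card_le_card hsub
    have h₂ : 0 < σ.card := card_pos.2 ⟨ρ₀, hρ₀⟩
    rw [card_insert_of_notMem fun h => hi₀σ (mem_of_mem_erase h), hτcard] at h₁
    omega
  refine ⟨σ', ⟨hσ, hσ', fun h => hi₀σ (h ▸ hsub (mem_insert_self _ _)), τ,
    F.downward σ hσc τ (erase_subset _ _), hτcard, erase_subset _ _,
    (subset_insert _ _).trans hsub⟩, ?_⟩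
  rwa [← hz.eq_vertex hσ' (mem_faceOf_tightSet hb)]

-- Up to a constant, `y ↦ (-∑_{ρ ∈ σ'} u_ρ) ⬝ y` is minus the total slack of the facets in `σ'`.
lemma dotProduct_vertex_lt {σ σ' : Finset ι} (hσ : σ ∈ F.maxCones) (hσ' : σ' ∈ F.maxCones)
    (hne : σ ≠ σ') :
    (-∑ ρ ∈ σ', F.U ρ) ⬝ᵥ F.vertex z σ < (-∑ ρ ∈ σ', F.U ρ) ⬝ᵥ F.vertex z σ' := by
  have hslack : ∀ y, (-∑ ρ ∈ σ', F.U ρ) ⬝ᵥ y = ∑ ρ ∈ σ', z ρ - ∑ ρ ∈ σ', (F.U *ᵥ y + z) ρ := by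
    intro y
    have hrow : ∀ ρ, (F.U *ᵥ y) ρ = F.U ρ ⬝ᵥ y := fun _ => rfl
    rw [neg_dotProduct, sum_dotProduct σ' F.U y]
    simp only [Pi.add_apply, sum_add_distrib, hrow]
    ring
  have hv := hz.vertex_mem_faceOf (mem_filter.1 hσ).1
  have hv' := hz.vertex_mem_faceOf (mem_filter.1 hσ').1
  rw [hslack, hslack, sub_lt_sub_iff_left, sum_eq_zero (mem_faceOf_iff.1 hv').2]
  refine sum_pos' (fun ρ _ => hv.1 ρ) ?_
  by_contra! hzero
  refine hne (eq_of_subset_of_card_le ?_ ?_).symm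
  · rw [← hz.tightSet_eq hσ hv]
    exact fun ρ hρ => mem_tightSet.2 (le_antisymm (hzero ρ hρ) (hv.1 ρ))
  · rw [(mem_filter.1 hσ).2, (mem_filter.1 hσ').2]

lemma reflTransGen_adjacent {σ σ' : Finset ι} (hσ : σ ∈ F.maxCones) (hσ' : σ' ∈ F.maxCones) :
    Relation.ReflTransGen F.Adjacent σ σ' := by
  refine Relation.reflTransGen_of_exists_lt (fun a => (-∑ ρ ∈ σ', F.U ρ) ⬝ᵥ F.vertex z a)
    (fun a ha hne => ?_) hσ
  obtain ⟨a', hadj, hlt⟩ := hz.exists_adjacent_lt _ ha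
    (hz.vertex_mem_faceOf (mem_filter.1 hσ').1).1 (hz.dotProduct_vertex_lt ha hσ' hne)
  exact ⟨a', hadj.2.1, hadj, hlt⟩

end IsNormalFanOf

lemma Adj_eq_sum_monomial {ι κ : Type*} [Fintype ι] [DecidableEq ι] [Fintype κ] [DecidableEq κ]
    (U : Matrix ι κ ℝ) (cones : Finset (Finset ι)) :
    Adj U cones = ∑ σ ∈ cones.filter fun σ => σ.card = Fintype.card κ,
      monomial (indicatorExp σᶜ) (absDetRows U σ) := by
  simp only [Adj, monomial_indicatorExp]

/-- (Interpolation.) Let `P` be a full-dimensional simple polytope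
with `n` facets, normal fan `Σ` and ray matrix `U`. Any homogeneous polynomial `f` of
degree `n - d` that vanishes on the coordinate subspace `Λ_J` for every primitive
collection `J`, and on the `(n-d-1)`-plane `Λ_e ∩ H_e` for every edge `e` of `P`
(encoded by its normal cone `τ ∈ Σ(d-1)`, the two maximal cones `σ₁, σ₂ ⊇ τ`
corresponding to the vertices of `e`, and the rays `ρ₁ ∈ σ₁ ∖ τ`, `ρ₂ ∈ σ₂ ∖ τ`
of the facets `Q_e¹, Q_e²`), is a scalar multiple of the universal adjoint `Adj_P`.
Hence `A_P` is the unique such hypersurface of degree `n - d`. -/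
theorem statement9 {ι κ : Type*} [Fintype ι] [DecidableEq ι] [Fintype κ] [DecidableEq κ]
    (F : SimplicialFan ι κ) (hrank : F.U.rank = Fintype.card κ)
    (z : ι → ℝ) (hz : IsNormalFanOf F z)
    (f : MvPolynomial ι ℂ)
    (hdeg : f.IsHomogeneous (Fintype.card ι - Fintype.card κ))
    (h1 : ∀ J : Finset ι, (∀ σ ∈ F.cones, ¬ J ⊆ σ) →
      (∀ ρ ∈ J, ∃ σ ∈ F.cones, J.erase ρ ⊆ σ) →
      ∀ x : ι → ℂ, (∀ ρ ∈ J, x ρ = 0) → MvPolynomial.eval x f = 0)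
    (h2 : ∀ τ ∈ F.cones, τ.card = Fintype.card κ - 1 →
      ∀ σ₁ ∈ F.cones, ∀ σ₂ ∈ F.cones,
        σ₁.card = Fintype.card κ → σ₂.card = Fintype.card κ →
        τ ⊆ σ₁ → τ ⊆ σ₂ → σ₁ ≠ σ₂ →
        ∀ ρ₁ ∈ σ₁ \ τ, ∀ ρ₂ ∈ σ₂ \ τ,
        ∀ x : ι → ℂ, (∀ ρ ∈ τ, x ρ = 0) →
          (absDetRows F.U σ₁ : ℂ) * x ρ₂ + (absDetRows F.U σ₂ : ℂ) * x ρ₁ = 0 →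
          MvPolynomial.eval x f = 0) :
    ∃ c : ℂ, f = c • MvPolynomial.map (algebraMap ℝ ℂ) (Adj F.U F.cones) := by
  have hdn : Fintype.card κ ≤ Fintype.card ι := hrank ▸ F.U.rank_le_card_height
  set c : Finset ι → ℂ := fun σ => coeff (indicatorExp σᶜ) f
  set D : Finset ι → ℂ := fun σ => (absDetRows F.U σ : ℂ)
  have hD : ∀ σ ∈ F.maxCones, D σ ≠ 0 := fun σ hσ =>
    Complex.ofReal_ne_zero.2 (SimplicialFan.absDetRows_ne_zero hσ)
  have hf : f = ∑ σ ∈ F.maxCones, monomial (indicatorExp σᶜ) (c σ) :=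
    eq_sum_monomial_indicatorExp fun m hm =>
      SimplicialFan.exists_mem_maxCones_eq_indicatorExp hdn hdeg (fun J hJ => h1 J hJ.1 hJ.2) hm
  have hwall : ∀ σ₁ σ₂, F.Adjacent σ₁ σ₂ → c σ₁ / D σ₁ = c σ₂ / D σ₂ := by
    rintro σ₁ σ₂ ⟨hσ₁, hσ₂, hne, τ, hτ, hτcard, hτ₁, hτ₂⟩
    obtain ⟨hσ₁c, hσ₁card⟩ := mem_filter.1 hσ₁
    obtain ⟨hσ₂c, hσ₂card⟩ := mem_filter.1 hσ₂
    rw [div_eq_div_iff (hD σ₁ hσ₁) (hD σ₂ hσ₂), mul_comm, mul_comm (c σ₂)]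
    refine mul_eq_mul_of_vanishing_on_wall (V := F.maxCones) (fun σ hσ => (mem_filter.1 hσ).2) c
      hσ₁ hσ₂ hne hτcard hτ₁ hτ₂ (D σ₁) (D σ₂) fun ρ₁ hρ₁ ρ₂ hρ₂ x hxτ hx => ?_
    rw [← h2 τ hτ hτcard σ₁ hσ₁c σ₂ hσ₂c hσ₁card hσ₂card hτ₁ hτ₂ hne ρ₁ hρ₁ ρ₂ hρ₂ x hxτ hx, hf,
      map_sum]
    simp only [eval_monomial_indicatorExp]
  obtain hV | ⟨σ₀, hσ₀⟩ := F.maxCones.eq_empty_or_nonempty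
  · exact ⟨0, by rw [hf, hV, sum_empty, zero_smul]⟩
  refine ⟨c σ₀ / D σ₀, ?_⟩
  rw [hf, Adj_eq_sum_monomial, map_sum, smul_sum]
  refine sum_congr rfl fun σ hσ => ?_
  have hq : c σ / D σ = c σ₀ / D σ₀ := by
    induction hz.reflTransGen_adjacent hσ hσ₀ with
    | refl => rfl
    | tail _ hadj ih => exact (ih hadj.1).trans (hwall _ _ hadj)
  rw [map_monomial, smul_monomial, ← hq, smul_eq_mul, Complex.coe_algebraMap]
  exact congrArg _ (div_mul_cancel₀ _ (hD σ hσ)).symm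
end
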